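/- Let ω^{(h)}_h be a σ-positive function on a subspace H_h of a complex Hilbert space H (with σ(f,g) = Im⟨f,g⟩). Then its extension to H defined by φ̃(f) = ω^{(h)}_h-value at f if f ∈ H_h and φ̃(f) = 0 if f ∉ H_h is σ-positive on all of H. -/

import Mathlib

open scoped InnerProductSpace ComplexOrder

noncomputable section
open scoped Classical

variable {H : Type*} [NormedAddCommGroup H] [InnerProductSpace ℂ H]

/-- `φ : H → ℂ` is `σ`-positive (for `σ(f,g) = Im⟪f,g⟫`) on a set `S ⊆ H`. -/
def IsSigmaPositiveOn (S : Set H) (φ : H → ℂ) : Prop :=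
  ∀ (n : ℕ) (a : Fin n → ℂ) (f : Fin n → H), (∀ j, f j ∈ S) →
    0 ≤ ∑ j : Fin n, ∑ k : Fin n,
      a j * (starRingEnd ℂ) (a k) *
        Complex.exp (-(Complex.I / 2) * ((⟪f j, f k⟫_ℂ).im : ℂ)) * φ (f j - f k)

/-!
Split the family `f₁, …, fₙ` according to the cosets of `K`. The zero extension kills every
term coupling two different cosets, so the form is a sum of one block per coset. On a coset
`g + K` the extension agrees with `φ` on all differences, and translating the block by `-g`
(absorbing the phases `exp (-(i/2) σ(f_j, g))` into the coefficients) turns it into a form of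
`φ` on `K` itself.
-/

theorem Finset.sum_sum_eq_sum_fiberwise_of_ne {ι κ M : Type*} [AddCommMonoid M] [DecidableEq κ]
    (s : Finset ι) (c : ι → κ) (T : ι → ι → M) (hT : ∀ j ∈ s, ∀ k ∈ s, c j ≠ c k → T j k = 0) :
    ∑ j ∈ s, ∑ k ∈ s, T j k =
      ∑ m ∈ s.image c, ∑ j ∈ s with c j = m, ∑ k ∈ s with c k = m, T j k := by
  calc ∑ j ∈ s, ∑ k ∈ s, T j k = ∑ j ∈ s, ∑ k ∈ s with c k = c j, T j k :=
        Finset.sum_congr rfl fun j hj => (Finset.sum_filter_of_ne fun k hk hTk =>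
          not_not.mp fun hne => hTk (hT j hj k hk (Ne.symm hne))).symm
    _ = _ := by
        rw [← Finset.sum_fiberwise_of_maps_to fun j hj => Finset.mem_image_of_mem c hj]
        refine Finset.sum_congr rfl fun m _ => Finset.sum_congr rfl fun j hj => ?_
        rw [(Finset.mem_filter.mp hj).2]

theorem im_inner_sub_sub (x y g : H) :
    (⟪x - g, y - g⟫_ℂ).im = (⟪x, y⟫_ℂ).im - (⟪x, g⟫_ℂ).im + (⟪y, g⟫_ℂ).im := by
  have hgy : (⟪g, y⟫_ℂ).im = -(⟪y, g⟫_ℂ).im := by rw [← inner_conj_symm, Complex.conj_im]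
  have hgg : (⟪g, g⟫_ℂ).im = 0 := inner_self_im (𝕜 := ℂ) g
  simp only [inner_sub_left, inner_sub_right, Complex.sub_im, hgy, hgg]
  ring

def sigmaForm {ι : Type*} (φ : H → ℂ) (s : Finset ι) (a : ι → ℂ) (f : ι → H) : ℂ :=
  ∑ j ∈ s, ∑ k ∈ s, a j * (starRingEnd ℂ) (a k) *
    Complex.exp (-(Complex.I / 2) * ((⟪f j, f k⟫_ℂ).im : ℂ)) * φ (f j - f k)

theorem sigmaForm_comp_equiv {ι κ : Type*} [Fintype ι] [Fintype κ] (φ : H → ℂ) (e : κ ≃ ι)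
    (a : ι → ℂ) (f : ι → H) :
    sigmaForm φ .univ (a ∘ e) (f ∘ e) = sigmaForm φ .univ a f :=
  Fintype.sum_equiv e _ _ fun _ => Fintype.sum_equiv e _ _ fun _ => rfl

theorem sigmaForm_subtype {ι : Type*} (φ : H → ℂ) (s : Finset ι) (a : ι → ℂ) (f : ι → H) :
    sigmaForm φ (.univ : Finset s) (fun j => a j) (fun j => f j) = sigmaForm φ s a f := by
  let T (j k : ι) : ℂ := a j * (starRingEnd ℂ) (a k) *
    Complex.exp (-(Complex.I / 2) * ((⟪f j, f k⟫_ℂ).im : ℂ)) * φ (f j - f k)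
  change ∑ j : s, ∑ k : s, T j k = ∑ j ∈ s, ∑ k ∈ s, T j k
  simp only [Finset.sum_coe_sort s]
  exact Finset.sum_coe_sort s fun j => ∑ k ∈ s, T j k

theorem IsSigmaPositiveOn.sigmaForm_nonneg {ι : Type*} {S : Set H} {φ : H → ℂ}
    (hφ : IsSigmaPositiveOn S φ) (s : Finset ι) (a : ι → ℂ) (f : ι → H)
    (hf : ∀ j ∈ s, f j ∈ S) : 0 ≤ sigmaForm φ s a f := by
  rw [← sigmaForm_subtype, ← sigmaForm_comp_equiv φ s.equivFin.symm]
  exact hφ _ _ _ fun p => hf _ (s.equivFin.symm p).2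

theorem sigmaForm_sub_const {ι : Type*} (φ : H → ℂ) (s : Finset ι) (a : ι → ℂ) (f : ι → H)
    (g : H) :
    sigmaForm φ s (fun j => a j * Complex.exp (-(Complex.I / 2) * ((⟪f j, g⟫_ℂ).im : ℂ)))
      (fun j => f j - g) = sigmaForm φ s a f := by
  refine Finset.sum_congr rfl fun j _ => Finset.sum_congr rfl fun k _ => ?_
  have hphase : Complex.exp (-(Complex.I / 2) * ((⟪f j, g⟫_ℂ).im : ℂ)) *
      (starRingEnd ℂ) (Complex.exp (-(Complex.I / 2) * ((⟪f k, g⟫_ℂ).im : ℂ))) *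
      Complex.exp (-(Complex.I / 2) * ((⟪f j - g, f k - g⟫_ℂ).im : ℂ)) =
      Complex.exp (-(Complex.I / 2) * ((⟪f j, f k⟫_ℂ).im : ℂ)) := by
    rw [← Complex.exp_conj, ← Complex.exp_add, ← Complex.exp_add, im_inner_sub_sub]
    congr 1
    simp only [map_mul, map_neg, map_div₀, Complex.conj_I, Complex.conj_ofReal, map_ofNat]
    push_cast
    ring
  rw [sub_sub_sub_cancel_right, map_mul]
  linear_combination (a j * (starRingEnd ℂ) (a k) * φ (f j - f k)) * hphase

theorem IsSigmaPositiveOn.preimage_sub_const {S : Set H} {φ : H → ℂ}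
    (hφ : IsSigmaPositiveOn S φ) (g : H) : IsSigmaPositiveOn ((· - g) ⁻¹' S) φ := fun n a f hf => by
  change 0 ≤ sigmaForm φ .univ a f
  rw [← sigmaForm_sub_const φ _ a f g]
  exact hφ n _ _ hf

theorem IsSigmaPositiveOn.congr {S : Set H} {φ ψ : H → ℂ} (hφ : IsSigmaPositiveOn S φ)
    (h : ∀ x ∈ S, ∀ y ∈ S, φ (x - y) = ψ (x - y)) : IsSigmaPositiveOn S ψ := fun n a f hf => by
  have hform : sigmaForm φ .univ a f = sigmaForm ψ .univ a f :=
    Finset.sum_congr rfl fun j _ => Finset.sum_congr rfl fun k _ => by rw [h _ (hf j) _ (hf k)]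
  change 0 ≤ sigmaForm ψ .univ a f
  exact hform ▸ hφ n a f hf

theorem zero_extension_sigma_positive_general
    (K : Submodule ℂ H) (φ : H → ℂ)
    (hφ : IsSigmaPositiveOn (K : Set H) φ) :
    IsSigmaPositiveOn (Set.univ : Set H) (fun f => if f ∈ K then φ f else 0) := by
  set ψ : H → ℂ := fun f => if f ∈ K then φ f else 0
  have hcoset (g : H) : IsSigmaPositiveOn ((· - g) ⁻¹' (K : Set H)) ψ :=
    (hφ.preimage_sub_const g).congr fun x hx y hy => by
      simp only [ψ, if_pos (by simpa using K.sub_mem hx hy)]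
  intro n a f _
  change 0 ≤ sigmaForm ψ .univ a f
  rw [sigmaForm, Finset.sum_sum_eq_sum_fiberwise_of_ne _ (fun j => K.mkQ (f j))]
  · refine Finset.sum_nonneg fun m _ => ?_
    obtain ⟨g, rfl⟩ := K.mkQ_surjective m
    refine (hcoset g).sigmaForm_nonneg _ a f fun j hj => ?_
    simpa [Submodule.Quotient.eq] using (Finset.mem_filter.mp hj).2
  · intro j _ k _ hjk
    have hjk' : f j - f k ∉ K := by simpa [Submodule.Quotient.eq] using hjk
    simp [ψ, hjk']

/-- if `φ` is `σ`-positive on a closed complex subspace `H_h ⊆ H`,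
then its extension by zero off `H_h` is `σ`-positive on all of `H`. -/
theorem zero_extension_sigma_positive
    (K : Submodule ℂ H) (hK : IsClosed (K : Set H)) (φ : H → ℂ)
    (hφ : IsSigmaPositiveOn (K : Set H) φ) :
    IsSigmaPositiveOn (Set.univ : Set H) (fun f => if f ∈ K then φ f else 0) :=
  zero_extension_sigma_positive_general K φ hφ

end
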